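/- arXiv:1302.3103 — 2 statements merged into one kernel-verified Lean document; each statement's English description precedes it below -/
import Mathlib

section
/- Smoothed dual function has Lipschitz gradient: if for each λ the minimizer x(λ) = argmin_{x ∈ X} (f(x) + μP(x) + λᵀGx) is unique with f + μP σ-strongly convex on the convex set X, then the function d_μ(λ) = min_{x ∈ X}(f(x) + μP(x) + λᵀ(Gx − g)) is differentiable with ∇d_μ(λ) = G x(λ) − g, and ∇d_μ is Lipschitz continuous with constant ‖G‖²/σ. -/
open RealInnerProductSpace

section Aux

variable {E : Type*} [NormedAddCommGroup E] [InnerProductSpace ℝ E]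

/-- Strongly convex function bound at a minimizer. -/
lemma strongConvexOn_min_bound {X : Set E} {σ : ℝ} (hσ : 0 < σ) {ψ : E → ℝ}
    (h : StrongConvexOn X σ ψ) {x y : E} (hx : x ∈ X) (hy : y ∈ X)
    (hmin : ∀ z ∈ X, ψ x ≤ ψ z) :
    ψ x + σ / 2 * ‖x - y‖ ^ 2 ≤ ψ y := by
  set c : ℝ := σ / 2 * ‖x - y‖ ^ 2 with hc
  have hc0 : 0 ≤ c := by positivity
  rw [add_comm]
  rw [← le_sub_iff_add_le]
  refine le_of_forall_pos_le_add fun ε hε => ?_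
  rcases eq_or_lt_of_le hc0 with hc' | hc'
  · have := hmin y hy; linarith
  · set t : ℝ := min (ε / c) (1 / 2) with ht
    have ht0 : 0 < t := lt_min (by positivity) (by norm_num)
    have ht1 : t ≤ 1 / 2 := min_le_right _ _
    have key := h.2 hy hx (le_of_lt ht0) (by linarith : (0:ℝ) ≤ 1 - t) (by ring)
    have hmem : t • y + (1 - t) • x ∈ X := h.1 hy hx ht0.le (by linarith) (by ring)
    have h1 : ψ x ≤ ψ (t • y + (1 - t) • x) := hmin _ hmem
    have hcc : σ / 2 * ‖y - x‖ ^ 2 = c := by rw [hc, norm_sub_rev]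
    beta_reduce at key
    rw [smul_eq_mul, smul_eq_mul, hcc] at key
    have h2 : t * ψ x + t * (1 - t) * c ≤ t * ψ y := by nlinarith
    have h3 : ψ x + (1 - t) * c ≤ ψ y := by
      have := (mul_le_mul_iff_right₀ ht0).mp (by nlinarith : t * (ψ x + (1 - t) * c) ≤ t * ψ y)
      linarith
    have htc : t * c ≤ ε := by
      calc t * c ≤ ε / c * c := mul_le_mul_of_nonneg_right (min_le_left _ _) hc0
        _ = ε := div_mul_cancel₀ _ (ne_of_gt hc')
    linarith

end Aux

/-- The smoothed dual function `d_μ(λ) = min_{x ∈ X} (f(x) + μ P(x) + λᵀ(Gx − g))`. -/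
noncomputable def smoothedDual {n m : ℕ} (X : Set (EuclideanSpace ℝ (Fin n)))
    (f P : EuclideanSpace ℝ (Fin n) → ℝ) (μ : ℝ) (G : Matrix (Fin m) (Fin n) ℝ)
    (g : EuclideanSpace ℝ (Fin m)) (lam : EuclideanSpace ℝ (Fin m)) : ℝ :=
  sInf ((fun x => f x + μ * P x + ⟪lam, Matrix.toEuclideanLin G x - g⟫) '' X)

set_option maxHeartbeats 1000000 in
/-- If `f + μP` is `σ`-strongly convex on the nonempty closed convex set `X` and
`x(λ)` is the unique minimizer defining the smoothed dual `d_μ`, then `d_μ` is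
differentiable with `∇d_μ(λ) = G x(λ) − g`, and this gradient is Lipschitz with
constant `‖G‖²/σ`. -/
theorem smoothedDual_gradient_lipschitz {n m : ℕ}
    (X : Set (EuclideanSpace ℝ (Fin n))) (hXne : X.Nonempty) (hXcl : IsClosed X)
    (hXconv : Convex ℝ X)
    (f P : EuclideanSpace ℝ (Fin n) → ℝ) (hf : Continuous f) (hP : Continuous P)
    (μ σ : ℝ) (hμ : 0 < μ) (hσ : 0 < σ)
    (hstrong : StrongConvexOn X σ (fun x => f x + μ * P x))
    (G : Matrix (Fin m) (Fin n) ℝ) (g : EuclideanSpace ℝ (Fin m))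
    (xstar : EuclideanSpace ℝ (Fin m) → EuclideanSpace ℝ (Fin n))
    (hxstar : ∀ lam, xstar lam ∈ X ∧
      (∀ y ∈ X, f (xstar lam) + μ * P (xstar lam) + ⟪lam, Matrix.toEuclideanLin G (xstar lam) - g⟫
        ≤ f y + μ * P y + ⟪lam, Matrix.toEuclideanLin G y - g⟫) ∧
      (∀ y ∈ X, (f y + μ * P y + ⟪lam, Matrix.toEuclideanLin G y - g⟫ =
          f (xstar lam) + μ * P (xstar lam) + ⟪lam, Matrix.toEuclideanLin G (xstar lam) - g⟫) →
        y = xstar lam)) :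
    (∀ lam, HasGradientAt (smoothedDual X f P μ G g)
        (Matrix.toEuclideanLin G (xstar lam) - g) lam) ∧
      ∀ lam₁ lam₂,
        ‖(Matrix.toEuclideanLin G (xstar lam₁) - g) - (Matrix.toEuclideanLin G (xstar lam₂) - g)‖
          ≤ ‖LinearMap.toContinuousLinearMap (Matrix.toEuclideanLin G)‖ ^ 2 / σ *
            ‖lam₁ - lam₂‖ := by
  set A := Matrix.toEuclideanLin G with hA
  set Ac := LinearMap.toContinuousLinearMap (Matrix.toEuclideanLin G) with hAc
  have hAcA : ∀ x, Ac x = A x := fun x => by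
    rw [hAc, LinearMap.coe_toContinuousLinearMap']
  have hAnorm : ∀ x, ‖A x‖ ≤ ‖Ac‖ * ‖x‖ := fun x => by
    rw [← hAcA]; exact Ac.le_opNorm x
  -- strong convexity of the shifted objective
  have hφconv : ∀ lam : EuclideanSpace ℝ (Fin m),
      StrongConvexOn X σ (fun x => f x + μ * P x + ⟪lam, A x - g⟫) := by
    intro lam
    refine ⟨hstrong.1, fun x hx y hy a b ha hb hab => ?_⟩
    have hF := hstrong.2 hx hy ha hb hab
    beta_reduce at hF ⊢
    rw [smul_eq_mul, smul_eq_mul] at hF ⊢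
    have hlin : ⟪lam, A (a • x + b • y) - g⟫
        = a * ⟪lam, A x - g⟫ + b * ⟪lam, A y - g⟫ := by
      simp only [map_add, map_smul, inner_sub_right, inner_add_right,
        real_inner_smul_right]
      linear_combination ⟪lam, g⟫ * hab
    rw [hlin]
    linarith
  -- Lipschitz bound on the gradient map
  have key : ∀ lam₁ lam₂ : EuclideanSpace ℝ (Fin m),
      ‖A (xstar lam₁) - A (xstar lam₂)‖ ≤ ‖Ac‖ ^ 2 / σ * ‖lam₁ - lam₂‖ := by
    intro lam₁ lam₂
    obtain ⟨hx1, hmin1, -⟩ := hxstar lam₁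
    obtain ⟨hx2, hmin2, -⟩ := hxstar lam₂
    have h1 := strongConvexOn_min_bound hσ (hφconv lam₁) hx1 hx2 hmin1
    have h2 := strongConvexOn_min_bound hσ (hφconv lam₂) hx2 hx1 hmin2
    beta_reduce at h1 h2
    rw [norm_sub_rev (xstar lam₂)] at h2
    have hD := norm_nonneg (xstar lam₁ - xstar lam₂)
    set D := ‖xstar lam₁ - xstar lam₂‖ with hDdef
    have hexp : ⟪lam₁ - lam₂, A (xstar lam₂) - A (xstar lam₁)⟫
        = (⟪lam₁, A (xstar lam₂) - g⟫ + ⟪lam₂, A (xstar lam₁) - g⟫)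
          - (⟪lam₁, A (xstar lam₁) - g⟫ + ⟪lam₂, A (xstar lam₂) - g⟫) := by
      simp only [inner_sub_left, inner_sub_right]; ring
    have hsum : σ * D ^ 2 ≤ ⟪lam₁ - lam₂, A (xstar lam₂) - A (xstar lam₁)⟫ := by
      rw [hexp]; linarith
    have hcs : ⟪lam₁ - lam₂, A (xstar lam₂) - A (xstar lam₁)⟫
        ≤ ‖lam₁ - lam₂‖ * (‖Ac‖ * D) := by
      refine (real_inner_le_norm _ _).trans ?_
      have : ‖A (xstar lam₂) - A (xstar lam₁)‖ ≤ ‖Ac‖ * D := by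
        rw [← map_sub, hDdef, norm_sub_rev (xstar lam₁)]
        exact hAnorm _
      exact mul_le_mul_of_nonneg_left this (norm_nonneg _)
    have hDle : D ≤ ‖Ac‖ / σ * ‖lam₁ - lam₂‖ := by
      rcases eq_or_lt_of_le hD with h0 | h0
      · rw [← h0]; positivity
      · have hsq : σ * D ^ 2 = σ * D * D := by ring
        have hstep : σ * D * D ≤ ‖Ac‖ * ‖lam₁ - lam₂‖ * D := by
          rw [← hsq]
          refine hsum.trans (hcs.trans_eq ?_)
          ring
        have hmul : σ * D ≤ ‖Ac‖ * ‖lam₁ - lam₂‖ := le_of_mul_le_mul_right hstep h0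
        calc D = σ * D / σ := by field_simp
          _ ≤ ‖Ac‖ * ‖lam₁ - lam₂‖ / σ := by gcongr
          _ = ‖Ac‖ / σ * ‖lam₁ - lam₂‖ := by ring
    calc ‖A (xstar lam₁) - A (xstar lam₂)‖ ≤ ‖Ac‖ * D := by
          rw [← map_sub]; exact hAnorm _
      _ ≤ ‖Ac‖ * (‖Ac‖ / σ * ‖lam₁ - lam₂‖) :=
          mul_le_mul_of_nonneg_left hDle (norm_nonneg _)
      _ = ‖Ac‖ ^ 2 / σ * ‖lam₁ - lam₂‖ := by ring
  -- value of the smoothed dual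
  have hval : ∀ lam, smoothedDual X f P μ G g lam
      = f (xstar lam) + μ * P (xstar lam) + ⟪lam, A (xstar lam) - g⟫ := by
    intro lam
    refine IsLeast.csInf_eq ⟨⟨xstar lam, (hxstar lam).1, rfl⟩, ?_⟩
    rintro r ⟨y, hy, rfl⟩
    exact (hxstar lam).2.1 y hy
  constructor
  · intro lam
    rw [hasGradientAt_iff_isLittleO]
    set L := ‖Ac‖ ^ 2 / σ with hL
    have hL0 : 0 ≤ L := by positivity
    have hbound : ∀ lam' : EuclideanSpace ℝ (Fin m),
        |smoothedDual X f P μ G g lam' - smoothedDual X f P μ G g lam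
          - ⟪A (xstar lam) - g, lam' - lam⟫| ≤ L * ‖lam' - lam‖ ^ 2 := by
      intro lam'
      have hub : smoothedDual X f P μ G g lam' - smoothedDual X f P μ G g lam
          ≤ ⟪lam' - lam, A (xstar lam) - g⟫ := by
        rw [hval lam', hval lam]
        have h := (hxstar lam').2.1 (xstar lam) (hxstar lam).1
        have : ⟪lam' - lam, A (xstar lam) - g⟫
            = ⟪lam', A (xstar lam) - g⟫ - ⟪lam, A (xstar lam) - g⟫ :=
          inner_sub_left _ _ _
        linarith
      have hlb : ⟪lam' - lam, A (xstar lam') - g⟫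
          ≤ smoothedDual X f P μ G g lam' - smoothedDual X f P μ G g lam := by
        rw [hval lam', hval lam]
        have h := (hxstar lam).2.1 (xstar lam') (hxstar lam').1
        have : ⟪lam' - lam, A (xstar lam') - g⟫
            = ⟪lam', A (xstar lam') - g⟫ - ⟪lam, A (xstar lam') - g⟫ :=
          inner_sub_left _ _ _
        linarith
      have hic : ⟪A (xstar lam) - g, lam' - lam⟫ = ⟪lam' - lam, A (xstar lam) - g⟫ :=
        real_inner_comm _ _
      have hdiff : ⟪lam' - lam, A (xstar lam') - g⟫ - ⟪lam' - lam, A (xstar lam) - g⟫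
          = ⟪lam' - lam, A (xstar lam') - A (xstar lam)⟫ := by
        rw [← inner_sub_right]; congr 1; abel
      have habs : |⟪lam' - lam, A (xstar lam') - A (xstar lam)⟫| ≤ L * ‖lam' - lam‖ ^ 2 := by
        refine (abs_real_inner_le_norm _ _).trans ?_
        calc ‖lam' - lam‖ * ‖A (xstar lam') - A (xstar lam)‖
            ≤ ‖lam' - lam‖ * (L * ‖lam' - lam‖) :=
              mul_le_mul_of_nonneg_left (key lam' lam) (norm_nonneg _)
          _ = L * ‖lam' - lam‖ ^ 2 := by ring
      rw [hic, abs_le] at *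
      constructor
      · have := habs.1; linarith
      · have hnn : 0 ≤ L * ‖lam' - lam‖ ^ 2 := by positivity
        linarith
    rw [Asymptotics.isLittleO_iff]
    intro c hc
    have hδ : 0 < c / (L + 1) := by positivity
    filter_upwards [Metric.ball_mem_nhds lam hδ] with lam' hball
    rw [Metric.mem_ball, dist_eq_norm] at hball
    have hb := hbound lam'
    rw [Real.norm_eq_abs]
    refine hb.trans ?_
    have hnl : 0 ≤ ‖lam' - lam‖ := norm_nonneg _
    calc L * ‖lam' - lam‖ ^ 2 = L * ‖lam' - lam‖ * ‖lam' - lam‖ := by ring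
      _ ≤ L * (c / (L + 1)) * ‖lam' - lam‖ := by
          apply mul_le_mul_of_nonneg_right _ hnl
          exact mul_le_mul_of_nonneg_left hball.le hL0
      _ ≤ c * ‖lam' - lam‖ := by
          refine mul_le_mul_of_nonneg_right ?_ hnl
          have h1 : L / (L + 1) ≤ 1 := div_le_one_of_le₀ (by linarith) (by linarith)
          calc L * (c / (L + 1)) = c * (L / (L + 1)) := by ring
            _ ≤ c * 1 := mul_le_mul_of_nonneg_left h1 hc.le
            _ = c := mul_one c
  · intro lam₁ lam₂
    have := key lam₁ lam₂
    rwa [sub_sub_sub_cancel_right]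
end

section
/- Convergence of the subgradient method with square-summable, non-summable steps: under the setting above with bounded subgradients, if Σ_k α_k = ∞ and Σ_k α_k² < ∞, then min_{0 ≤ j ≤ k} ψ(t_j) → ψ(t*) as k → ∞. -/
open RealInnerProductSpace

/-- Convergence of the subgradient method with square-summable but non-summable step
sizes and bounded subgradients: `min_{0 ≤ j ≤ k} ψ(t_j) → ψ(t*)`. -/
theorem subgradient_method_convergence {m : ℕ}
    (ψ : EuclideanSpace ℝ (Fin m) → ℝ) (hψ : ConvexOn ℝ Set.univ ψ)
    (tstar : EuclideanSpace ℝ (Fin m)) (hmin : ∀ t, ψ tstar ≤ ψ t)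
    (B : ℝ) (hB : 0 < B) (α : ℕ → ℝ) (hα : ∀ k, 0 < α k)
    (hdiv : Filter.Tendsto (fun N => ∑ k ∈ Finset.range N, α k) Filter.atTop Filter.atTop)
    (hsq : Summable fun k => (α k) ^ 2)
    (t s : ℕ → EuclideanSpace ℝ (Fin m))
    (hsub : ∀ k, ∀ y, ψ y ≥ ψ (t k) + ⟪s k, y - t k⟫)
    (hbound : ∀ k, ‖s k‖ ≤ B)
    (hiter : ∀ k, t (k + 1) = t k - α k • s k) :
    Filter.Tendsto
      (fun k => (Finset.range (k + 1)).inf' ⟨0, Finset.mem_range.mpr (Nat.succ_pos k)⟩ fun j => ψ (t j))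
      Filter.atTop (nhds (ψ tstar)) := by
  set ψstar := ψ tstar with hψs
  set S := ∑' k, (α k) ^ 2 with hS
  have hSnn : 0 ≤ S := tsum_nonneg fun k => sq_nonneg _
  set C := ‖t 0 - tstar‖ ^ 2 + B ^ 2 * S with hC
  -- key one-step inequality
  have key : ∀ k, ‖t (k + 1) - tstar‖ ^ 2
      ≤ ‖t k - tstar‖ ^ 2 - 2 * α k * (ψ (t k) - ψstar) + α k ^ 2 * B ^ 2 := by
    intro k
    have hexp : t (k + 1) - tstar = (t k - tstar) - α k • s k := by
      rw [hiter k]; abel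
    rw [hexp, norm_sub_sq_real]
    have h3 : ψ (t k) - ψstar ≤ ⟪t k - tstar, s k⟫ := by
      have h := hsub k tstar
      have h2 : ⟪s k, tstar - t k⟫ = -⟪t k - tstar, s k⟫ := by
        simp only [real_inner_comm (s k), inner_sub_right]; ring
      rw [h2] at h; linarith
    have h1 : α k * (ψ (t k) - ψstar) ≤ ⟪t k - tstar, α k • s k⟫ := by
      rw [real_inner_smul_right]
      exact mul_le_mul_of_nonneg_left h3 (le_of_lt (hα k))
    have h2 : ‖α k • s k‖ ^ 2 ≤ α k ^ 2 * B ^ 2 := by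
      rw [norm_smul, mul_pow, Real.norm_eq_abs, sq_abs]
      have hsB : ‖s k‖ ^ 2 ≤ B ^ 2 := by
        nlinarith [hbound k, norm_nonneg (s k)]
      nlinarith [sq_nonneg (α k)]
    nlinarith [h1, h2]
  have sum_ineq : ∀ N, ‖t N - tstar‖ ^ 2 + ∑ j ∈ Finset.range N, 2 * α j * (ψ (t j) - ψstar)
      ≤ ‖t 0 - tstar‖ ^ 2 + ∑ j ∈ Finset.range N, α j ^ 2 * B ^ 2 := by
    intro N
    induction N with
    | zero => simp
    | succ n ih =>
      rw [Finset.sum_range_succ, Finset.sum_range_succ]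
      have := key n
      linarith
  have partial_le : ∀ N, ∑ j ∈ Finset.range N, α j ^ 2 ≤ S :=
    fun N => Summable.sum_le_tsum _ (fun i _ => sq_nonneg _) hsq
  have sumC : ∀ N, ∑ j ∈ Finset.range N, 2 * α j * (ψ (t j) - ψstar) ≤ C := by
    intro N
    have h1 := sum_ineq N
    have h2 : ∑ j ∈ Finset.range N, α j ^ 2 * B ^ 2
        = (∑ j ∈ Finset.range N, α j ^ 2) * B ^ 2 := (Finset.sum_mul _ _ _).symm
    have h3 := partial_le N
    have h4 : (0:ℝ) ≤ ‖t N - tstar‖ ^ 2 := sq_nonneg _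
    nlinarith [sq_nonneg B]
  set A : ℕ → ℝ := fun k => ∑ j ∈ Finset.range (k + 1), α j with hA
  have hApos : ∀ k, 0 < A k :=
    fun k => Finset.sum_pos (fun i _ => hα i) Finset.nonempty_range_add_one
  set M : ℕ → ℝ := fun k => (Finset.range (k + 1)).inf' Finset.nonempty_range_add_one
    fun j => ψ (t j) with hM
  have hMlow : ∀ k, ψstar ≤ M k := fun k => Finset.le_inf' _ _ (fun j _ => hmin (t j))
  have hMup : ∀ k, M k ≤ ψstar + C / (2 * A k) := by
    intro k
    have h1 : (M k - ψstar) * (2 * A k) ≤ C := by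
      have he : ∑ j ∈ Finset.range (k + 1), 2 * α j * (M k - ψstar)
          = (M k - ψstar) * (2 * A k) := by
        rw [← Finset.sum_mul, ← Finset.mul_sum]; ring
      have hle : ∑ j ∈ Finset.range (k + 1), 2 * α j * (M k - ψstar)
          ≤ ∑ j ∈ Finset.range (k + 1), 2 * α j * (ψ (t j) - ψstar) := by
        apply Finset.sum_le_sum
        intro j hj
        have hMj : M k ≤ ψ (t j) := Finset.inf'_le _ hj
        have := hα j
        nlinarith
      rw [← he]
      exact le_trans hle (sumC (k + 1))
    have h2 : (0:ℝ) < 2 * A k := by have := hApos k; linarith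
    have := (le_div_iff₀ h2).mpr h1
    linarith
  have hAtop : Filter.Tendsto (fun k => 2 * A k) Filter.atTop Filter.atTop := by
    have h1 : Filter.Tendsto A Filter.atTop Filter.atTop := by
      have := hdiv.comp (Filter.tendsto_add_atTop_nat 1)
      simpa [Function.comp_def, hA] using this
    exact h1.const_mul_atTop two_pos
  have hdiv0 : Filter.Tendsto (fun k => C / (2 * A k)) Filter.atTop (nhds 0) :=
    Filter.Tendsto.div_atTop tendsto_const_nhds hAtop
  have hup : Filter.Tendsto (fun k => ψstar + C / (2 * A k)) Filter.atTop (nhds ψstar) := by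
    have := (tendsto_const_nhds (x := ψstar) (f := Filter.atTop (α := ℕ))).add hdiv0
    simpa using this
  exact tendsto_of_tendsto_of_tendsto_of_le_of_le tendsto_const_nhds hup hMlow hMup
end
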